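/- arXiv:2112.08678 — 2 statements merged into one kernel-verified Lean document; each statement's English description precedes it below -/
import Mathlib

section
/- Let (a,b) be a Golay complementary pair of length N, let (c,d) be its standard Golay complementary mate (c_k = conj(b_{N−1−k}), d_k = −conj(a_{N−1−k})), let x1,x2,x3,x4 ∈ {+1,−1} with x1·x2 + x3·x4 = 0, and define p = x1·a ∥ x2·b ∥ x3·a ∥ x4·b and q = x1·c ∥ x2·d ∥ x3·c ∥ x4·d of length 4N. Then for every shift τ with 2N ≤ τ ≤ 3N−1, C_p(τ) + C_q(τ) = 0. -/
open Finset

/-- Aperiodic cross-correlation of length-`L` complex sequences at shift `0 ≤ τ`. -/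
noncomputable def aCorr (a b : ℕ → ℂ) (L τ : ℕ) : ℂ :=
  ∑ k ∈ Finset.range (L - τ), a k * (starRingEnd ℂ) (b (k + τ))

/-- Periodic cross-correlation of length-`L` complex sequences at shift `τ`. -/
noncomputable def pCorr (a b : ℕ → ℂ) (L τ : ℕ) : ℂ :=
  ∑ k ∈ Finset.range L, a k * (starRingEnd ℂ) (b ((k + τ) % L))

/-- The length-`4N` sequence `x1·a ∥ x2·b ∥ x3·a ∥ x4·b`. -/
noncomputable def quadConcat (N : ℕ) (x1 x2 x3 x4 : ℂ) (a b : ℕ → ℂ) : ℕ → ℂ :=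
  fun n =>
    if n < N then x1 * a n
    else if n < 2 * N then x2 * b (n - N)
    else if n < 3 * N then x3 * a (n - 2 * N)
    else x4 * b (n - 3 * N)

/-!
The mate `(c, d)` is obtained from `(a, b)` by reversing and conjugating, and reversing and
conjugating a sequence does not change its autocorrelation. Reversing and conjugating
`q = x1·c ∥ x2·d ∥ x3·c ∥ x4·d` gives `-x̄4·a ∥ x̄3·b ∥ -x̄2·a ∥ x̄1·b`, so `C_p(τ) + C_q(τ)` is a sum
of autocorrelations of two concatenations of the same pair `(a, b)`. For `τ ≥ 2N` a term of either
correlation pairs block 1 with block 3 or 4, or block 2 with block 4, and the corresponding terms of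
the two concatenations cancel: this is where `x1 x2 + x3 x4 = 0` enters, as `x1 x3 + x2 x4 = 0`.
-/

noncomputable def conjReverse (L : ℕ) (u : ℕ → ℂ) : ℕ → ℂ :=
  fun k => starRingEnd ℂ (u (L - 1 - k))

lemma aCorr_conjReverse (L τ : ℕ) (u v : ℕ → ℂ) :
    aCorr (conjReverse L u) (conjReverse L v) L τ = aCorr v u L τ := by
  unfold aCorr conjReverse
  rw [← sum_range_reflect]
  refine sum_congr rfl fun k hk => ?_
  rw [mem_range] at hk
  rw [show L - 1 - (L - τ - 1 - k) = k + τ by omega,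
    show L - 1 - (L - τ - 1 - k + τ) = k by omega, Complex.conj_conj, mul_comm]

lemma aCorr_congr {L τ : ℕ} {u u' v v' : ℕ → ℂ} (hu : ∀ k < L, u k = u' k)
    (hv : ∀ k < L, v k = v' k) : aCorr u v L τ = aCorr u' v' L τ := by
  unfold aCorr
  refine sum_congr rfl fun k hk => ?_
  rw [mem_range] at hk
  rw [hu k (by omega), hv (k + τ) (by omega)]

section quadConcat

variable {N : ℕ} {x1 x2 x3 x4 : ℂ} {a b : ℕ → ℂ} {n : ℕ}

lemma quadConcat_apply_first (h : n < N) : quadConcat N x1 x2 x3 x4 a b n = x1 * a n := by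
  simp only [quadConcat, if_pos h]

lemma quadConcat_apply_second (h₁ : N ≤ n) (h₂ : n < 2 * N) :
    quadConcat N x1 x2 x3 x4 a b n = x2 * b (n - N) := by
  simp only [quadConcat, if_neg (show ¬n < N by omega), if_pos h₂]

lemma quadConcat_apply_third (h₁ : 2 * N ≤ n) (h₂ : n < 3 * N) :
    quadConcat N x1 x2 x3 x4 a b n = x3 * a (n - 2 * N) := by
  simp only [quadConcat, if_neg (show ¬n < N by omega), if_neg (show ¬n < 2 * N by omega),
    if_pos h₂]

lemma quadConcat_apply_fourth (h : 3 * N ≤ n) :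
    quadConcat N x1 x2 x3 x4 a b n = x4 * b (n - 3 * N) := by
  simp only [quadConcat, if_neg (show ¬n < N by omega), if_neg (show ¬n < 2 * N by omega),
    if_neg (show ¬n < 3 * N by omega)]

end quadConcat

lemma conjReverse_quadConcat_mate (N : ℕ) (x1 x2 x3 x4 : ℂ) (a b : ℕ → ℂ) {n : ℕ}
    (hn : n < 4 * N) :
    conjReverse (4 * N) (quadConcat N x1 x2 x3 x4 (conjReverse N b) (-conjReverse N a)) n =
      quadConcat N (-starRingEnd ℂ x4) (starRingEnd ℂ x3) (-starRingEnd ℂ x2) (starRingEnd ℂ x1)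
        a b n := by
  unfold conjReverse quadConcat
  split_ifs <;> first
    | omega
    | simp only [Pi.neg_apply, map_mul, map_neg, Complex.conj_conj, neg_mul,
        mul_neg]
      first | (congr 2; omega) | (congr 3; omega)

lemma aCorr_quadConcat_add_eq_zero (N τ : ℕ) (x1 x2 x3 x4 y1 y2 y3 y4 : ℂ) (a b : ℕ → ℂ)
    (hτ : 2 * N ≤ τ)
    (h13 : x1 * starRingEnd ℂ x3 + y1 * starRingEnd ℂ y3 = 0)
    (h14 : x1 * starRingEnd ℂ x4 + y1 * starRingEnd ℂ y4 = 0)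
    (h24 : x2 * starRingEnd ℂ x4 + y2 * starRingEnd ℂ y4 = 0) :
    aCorr (quadConcat N x1 x2 x3 x4 a b) (quadConcat N x1 x2 x3 x4 a b) (4 * N) τ +
      aCorr (quadConcat N y1 y2 y3 y4 a b) (quadConcat N y1 y2 y3 y4 a b) (4 * N) τ = 0 := by
  unfold aCorr
  rw [← sum_add_distrib]
  refine sum_eq_zero fun k hk => ?_
  rw [mem_range] at hk
  by_cases hk₁ : k < N
  · rw [quadConcat_apply_first hk₁, quadConcat_apply_first hk₁]
    by_cases hk₃ : k + τ < 3 * N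
    · simp only [quadConcat_apply_third (show 2 * N ≤ k + τ by omega) hk₃, map_mul]
      linear_combination (a k * starRingEnd ℂ (a (k + τ - 2 * N))) * h13
    · simp only [quadConcat_apply_fourth (show 3 * N ≤ k + τ by omega), map_mul]
      linear_combination (a k * starRingEnd ℂ (b (k + τ - 3 * N))) * h14
  · simp only [quadConcat_apply_second (not_lt.mp hk₁) (show k < 2 * N by omega),
      quadConcat_apply_fourth (show 3 * N ≤ k + τ by omega), map_mul]
    linear_combination (b (k - N) * starRingEnd ℂ (b (k + τ - 3 * N))) * h24

theorem statement5_general (N : ℕ) (a b c d : ℕ → ℂ) (x1 x2 x3 x4 : ℂ)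
    (hx2 : x2 = 1 ∨ x2 = -1)
    (hx3 : x3 = 1 ∨ x3 = -1) (hx4 : x4 = 1 ∨ x4 = -1)
    (hsum : x1 * x2 + x3 * x4 = 0)
    (hc : ∀ k, c k = (starRingEnd ℂ) (b (N - 1 - k)))
    (hd : ∀ k, d k = -(starRingEnd ℂ) (a (N - 1 - k)))
    (p q : ℕ → ℂ)
    (hp : p = quadConcat N x1 x2 x3 x4 a b)
    (hq : q = quadConcat N x1 x2 x3 x4 c d) :
    ∀ τ, 2 * N ≤ τ → τ ≤ 3 * N - 1 →
      aCorr p p (4 * N) τ + aCorr q q (4 * N) τ = 0 := by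
  intro τ hτ _
  obtain rfl : c = conjReverse N b := funext hc
  obtain rfl : d = -conjReverse N a := funext hd
  subst hp hq
  have hkey : x1 * x3 + x2 * x4 = 0 := by
    linear_combination x2 * x3 * hsum - x1 * x3 * sq_eq_one_iff.mpr hx2 -
      x2 * x4 * sq_eq_one_iff.mpr hx3
  have hx3' : starRingEnd ℂ x3 = x3 := by rcases hx3 with rfl | rfl <;> simp
  have hx4' : starRingEnd ℂ x4 = x4 := by rcases hx4 with rfl | rfl <;> simp
  set q := quadConcat N x1 x2 x3 x4 (conjReverse N b) (-conjReverse N a)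
  rw [← aCorr_conjReverse (4 * N) τ q q,
    aCorr_congr (fun _ => conjReverse_quadConcat_mate N x1 x2 x3 x4 a b)
      (fun _ => conjReverse_quadConcat_mate N x1 x2 x3 x4 a b)]
  refine aCorr_quadConcat_add_eq_zero N τ _ _ _ _ _ _ _ _ a b hτ ?_ ?_ ?_ <;>
    simp only [map_neg, Complex.conj_conj, hx3', hx4']
  · linear_combination hkey
  · ring
  · linear_combination hkey

theorem statement5 (N : ℕ) (a b c d : ℕ → ℂ) (x1 x2 x3 x4 : ℂ)
    (hx1 : x1 = 1 ∨ x1 = -1) (hx2 : x2 = 1 ∨ x2 = -1)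
    (hx3 : x3 = 1 ∨ x3 = -1) (hx4 : x4 = 1 ∨ x4 = -1)
    (hsum : x1 * x2 + x3 * x4 = 0)
    (hGCP : ∀ τ, 1 ≤ τ → τ ≤ N - 1 → aCorr a a N τ + aCorr b b N τ = 0)
    (hc : ∀ k, c k = (starRingEnd ℂ) (b (N - 1 - k)))
    (hd : ∀ k, d k = -(starRingEnd ℂ) (a (N - 1 - k)))
    (p q : ℕ → ℂ)
    (hp : p = quadConcat N x1 x2 x3 x4 a b)
    (hq : q = quadConcat N x1 x2 x3 x4 c d) :
    ∀ τ, 2 * N ≤ τ → τ ≤ 3 * N - 1 →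
      aCorr p p (4 * N) τ + aCorr q q (4 * N) τ = 0 :=
  statement5_general N a b c d x1 x2 x3 x4 hx2 hx3 hx4 hsum hc hd p q hp hq
end

section
/- Let 𝔠 = {C^0,…,C^{M−1}} be an (M,M,N)-complete complementary code with sequences c^k_m of length N, let ω = exp(2πi/M) and f_{i,j} = ω^{i·j}, and for 0 ≤ k ≤ M−1 let B̃_k be the length-M²N sequence whose entry at position i·MN + j·N + n equals f_{i,j} · c^j_{k,n}. Then for every 0 ≤ k ≤ M−1, the periodic autocorrelation of B̃_k satisfies R_{B̃_k}(0) = M²N and R_{B̃_k}(τ) = 0 for all 1 ≤ τ ≤ (M−1)N. -/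
open Finset

/-- For an `(M,M,N)`-CCC with sequences `c k m` (set `k`, member `m`), the length-`M²N`
sequence `B̃ k` whose entry at position `i·MN + j·N + n` is `ω^(i·j) · c j k n`,
where `ω = exp(2πi/M)`. -/
noncomputable def Bseq (M N : ℕ) (c : ℕ → ℕ → ℕ → ℂ) (k : ℕ) : ℕ → ℂ :=
  fun n =>
    Complex.exp (2 * Real.pi * Complex.I * ((n / (M * N) : ℕ) : ℂ) *
        (((n % (M * N)) / N : ℕ) : ℂ) / (M : ℂ)) *
      c ((n % (M * N)) / N) k (n % N)

noncomputable def fpoly (N : ℕ) (a : ℕ → ℂ) : Polynomial ℂ :=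
  ∑ n ∈ Finset.range N, Polynomial.monomial n (a n)

noncomputable def gpoly (N : ℕ) (a : ℕ → ℂ) : Polynomial ℂ :=
  ∑ n ∈ Finset.range N, Polynomial.monomial (N - 1 - n) ((starRingEnd ℂ) (a n))

lemma aCorr_eq_zero (a b : ℕ → ℂ) (N τ : ℕ) (h : N ≤ τ) : aCorr a b N τ = 0 := by
  simp [aCorr, Nat.sub_eq_zero_of_le h]

lemma sum_ite_range {β : Type*} [AddCommMonoid β] (N v : ℕ) (hv : v ≤ N) (f : ℕ → β) :
    (∑ x ∈ Finset.range N, if x < v then f x else 0) = ∑ x ∈ Finset.range v, f x := by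
  rw [← Finset.sum_filter]
  congr 1
  ext x
  simp only [Finset.mem_filter, Finset.mem_range]
  omega

lemma coeff_fg (N : ℕ) (hN : 0 < N) (a b : ℕ → ℂ) (t : ℕ) :
    (fpoly N a * gpoly N b).coeff t =
      if t ≤ N - 1 then aCorr a b N (N - 1 - t)
      else (starRingEnd ℂ) (aCorr b a N (t - (N - 1))) := by
  have hexp : fpoly N a * gpoly N b =
      ∑ n ∈ Finset.range N, ∑ n' ∈ Finset.range N,
        Polynomial.monomial (n + (N - 1 - n')) (a n * (starRingEnd ℂ) (b n')) := by
    rw [fpoly, gpoly, Finset.sum_mul_sum]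
    simp [Polynomial.monomial_mul_monomial]
  rw [hexp]
  simp only [Polynomial.finset_sum_coeff, Polynomial.coeff_monomial]
  by_cases ht : t ≤ N - 1
  · rw [if_pos ht]
    set τ := N - 1 - t with hτ
    have key : ∀ n ∈ Finset.range N,
        (∑ n' ∈ Finset.range N,
          if n + (N - 1 - n') = t then a n * (starRingEnd ℂ) (b n') else 0) =
        (if n < N - τ then a n * (starRingEnd ℂ) (b (n + τ)) else 0) := by
      intro n hn
      simp only [Finset.mem_range] at hn
      rw [show (∑ n' ∈ Finset.range N,
          if n + (N - 1 - n') = t then a n * (starRingEnd ℂ) (b n') else 0) =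
          ∑ n' ∈ Finset.range N,
          if n' = n + τ then a n * (starRingEnd ℂ) (b n') else 0 from ?_]
      · rw [Finset.sum_ite_eq' (Finset.range N)]
        simp only [Finset.mem_range]
        congr 1
        · rw [eq_iff_iff]; omega
      · apply Finset.sum_congr rfl
        intro n' hn'
        simp only [Finset.mem_range] at hn'
        congr 1
        rw [eq_iff_iff]
        omega
    rw [Finset.sum_congr rfl key, sum_ite_range N (N - τ) (by omega), aCorr]
  · rw [if_neg ht]
    set τ := t - (N - 1) with hτ
    rw [Finset.sum_comm]
    have key : ∀ n' ∈ Finset.range N,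
        (∑ n ∈ Finset.range N,
          if n + (N - 1 - n') = t then a n * (starRingEnd ℂ) (b n') else 0) =
        (if n' < N - τ then a (n' + τ) * (starRingEnd ℂ) (b n') else 0) := by
      intro n' hn'
      simp only [Finset.mem_range] at hn'
      rw [show (∑ n ∈ Finset.range N,
          if n + (N - 1 - n') = t then a n * (starRingEnd ℂ) (b n') else 0) =
          ∑ n ∈ Finset.range N,
          if n = n' + τ then a n * (starRingEnd ℂ) (b n') else 0 from ?_]
      · rw [Finset.sum_ite_eq' (Finset.range N)]
        simp only [Finset.mem_range]
        congr 1
        · rw [eq_iff_iff]; omega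
      · apply Finset.sum_congr rfl
        intro n hn
        simp only [Finset.mem_range] at hn
        congr 1
        rw [eq_iff_iff]
        omega
    rw [Finset.sum_congr rfl key, sum_ite_range N (N - τ) (by omega), aCorr, map_sum]
    apply Finset.sum_congr rfl
    intro n _
    simp [mul_comm]

lemma matrix_comm_of_smul {n : Type*} [Fintype n] [DecidableEq n] {R K : Type*}
    [CommRing R] [Field K] (φ : R →+* K) (hφ : Function.Injective φ)
    {A B : Matrix n n R} {d : R} (hd : φ d ≠ 0)
    (h : A * B = d • (1 : Matrix n n R)) : B * A = d • 1 := by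
  have hsm : ((d • (1 : Matrix n n R)).map φ) = φ d • (1 : Matrix n n K) := by
    ext i j
    simp [Matrix.map_apply, Matrix.one_apply, apply_ite φ, mul_ite]
  have h1 : (A.map φ) * ((φ d)⁻¹ • B.map φ) = 1 := by
    rw [Matrix.mul_smul, ← Matrix.map_mul, h, hsm, smul_smul, inv_mul_cancel₀ hd, one_smul]
  have h2 := mul_eq_one_comm.mp h1
  have h3 : B.map φ * A.map φ = φ d • 1 := by
    rw [Matrix.smul_mul] at h2
    calc B.map φ * A.map φ = φ d • ((φ d)⁻¹ • (B.map φ * A.map φ)) := by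
          rw [smul_smul, mul_inv_cancel₀ hd, one_smul]
      _ = φ d • (1 : Matrix n n K) := by rw [h2]
  have h4 : (B * A).map φ = (d • (1 : Matrix n n R)).map φ := by
    rw [Matrix.map_mul, h3, hsm]
  ext i j
  have := congrFun (congrFun h4 i) j
  exact hφ this

lemma transpose_lemma (M N : ℕ) (hM : 0 < M) (hN : 0 < N) (c : ℕ → ℕ → ℕ → ℂ)
    (hCCC : ∀ k1 < M, ∀ k2 < M, ∀ τ < N,
      ∑ m ∈ Finset.range M, aCorr (c k1 m) (c k2 m) N τ =
        if k1 = k2 ∧ τ = 0 then (M * N : ℂ) else 0)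
    (k : ℕ) (hk : k < M) (s : ℕ) (hs : s < N) :
    ∑ j ∈ Finset.range M, aCorr (c j k) (c j k) N s =
      if s = 0 then (M * N : ℂ) else 0 := by
  classical
  have FG_entry : ∀ k1 < M, ∀ k2 < M,
      ∑ m ∈ Finset.range M, fpoly N (c k1 m) * gpoly N (c k2 m) =
        if k1 = k2 then Polynomial.monomial (N - 1) ((M : ℂ) * N) else 0 := by
    intro k1 h1 k2 h2
    apply Polynomial.ext
    intro t
    rw [Polynomial.finset_sum_coeff,
      Finset.sum_congr rfl (fun m _ => coeff_fg N hN (c k1 m) (c k2 m) t)]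
    by_cases ht : t ≤ N - 1
    · simp only [if_pos ht]
      rw [hCCC k1 h1 k2 h2 (N - 1 - t) (by omega)]
      by_cases hkk : k1 = k2
      · simp only [if_pos hkk, Polynomial.coeff_monomial]
        congr 1
        rw [eq_iff_iff]
        omega
      · simp [hkk]
    · simp only [if_neg ht]
      rw [← map_sum]
      by_cases hbig : t - (N - 1) < N
      · rw [hCCC k2 h2 k1 h1 _ hbig]
        have : ¬(k2 = k1 ∧ t - (N - 1) = 0) := by
          rintro ⟨-, h⟩; omega
        simp only [if_neg this, map_zero]
        split_ifs with hkk
        · rw [Polynomial.coeff_monomial, if_neg (by omega)]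
        · simp
      · rw [Finset.sum_congr rfl
          (fun m _ => aCorr_eq_zero (c k2 m) (c k1 m) N _ (by omega))]
        simp only [Finset.sum_const_zero, map_zero]
        split_ifs with hkk
        · rw [Polynomial.coeff_monomial, if_neg (by omega)]
        · simp
  set d : Polynomial ℂ := Polynomial.monomial (N - 1) ((M : ℂ) * N) with hd
  set A : Matrix (Fin M) (Fin M) (Polynomial ℂ) :=
    Matrix.of (fun k1 m : Fin M => fpoly N (c k1 m)) with hA
  set B : Matrix (Fin M) (Fin M) (Polynomial ℂ) :=
    Matrix.of (fun m k1 : Fin M => gpoly N (c k1 m)) with hB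
  have hAB : A * B = d • 1 := by
    ext k1 k2
    rw [Matrix.mul_apply]
    have : ∀ m : Fin M, A k1 m * B m k2 = fpoly N (c k1 m) * gpoly N (c k2 m) := by
      intro m; simp [hA, hB]
    rw [Finset.sum_congr rfl (fun m _ => this m)]
    rw [Fin.sum_univ_eq_sum_range (fun m => fpoly N (c k1 m) * gpoly N (c k2 m)) M]
    rw [FG_entry k1 k1.isLt k2 k2.isLt]
    simp only [Matrix.smul_apply, Matrix.one_apply, smul_ite, smul_zero, smul_eq_mul, mul_one]
    by_cases hkk : (k1 : ℕ) = (k2 : ℕ)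
    · rw [if_pos hkk, if_pos (Fin.ext hkk)]; simp
    · rw [if_neg hkk, if_neg (fun h => hkk (congrArg Fin.val h))]; simp
  have hφinj : Function.Injective (algebraMap (Polynomial ℂ) (RatFunc ℂ)) :=
    IsFractionRing.injective (Polynomial ℂ) (RatFunc ℂ)
  have hdne : (algebraMap (Polynomial ℂ) (RatFunc ℂ)) d ≠ 0 := by
    rw [Ne, map_eq_zero_iff _ hφinj, hd]
    intro h
    have := Polynomial.monomial_eq_zero_iff ((M : ℂ) * N) (N - 1) |>.mp h
    have hMne : (M : ℂ) ≠ 0 := Nat.cast_ne_zero.mpr hM.ne'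
    have hNne : (N : ℂ) ≠ 0 := Nat.cast_ne_zero.mpr hN.ne'
    exact (mul_ne_zero hMne hNne) this
  have hBA := matrix_comm_of_smul (algebraMap (Polynomial ℂ) (RatFunc ℂ)) hφinj hdne hAB
  have hdiag := congrFun (congrFun hBA ⟨k, hk⟩) ⟨k, hk⟩
  rw [Matrix.mul_apply] at hdiag
  have : ∀ j : Fin M, B ⟨k, hk⟩ j * A j ⟨k, hk⟩ = fpoly N (c j k) * gpoly N (c j k) := by
    intro j; simp [hA, hB, mul_comm]
  rw [Finset.sum_congr rfl (fun j _ => this j),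
    Fin.sum_univ_eq_sum_range (fun j => fpoly N (c j k) * gpoly N (c j k)) M] at hdiag
  have hd2 : (d • (1 : Matrix (Fin M) (Fin M) (Polynomial ℂ))) ⟨k, hk⟩ ⟨k, hk⟩ = d := by
    simp [Matrix.one_apply]
  rw [hd2] at hdiag
  have hco := congrArg (fun p => Polynomial.coeff p (N - 1 - s)) hdiag
  rw [Polynomial.finset_sum_coeff] at hco
  rw [Finset.sum_congr rfl (fun j _ => coeff_fg N hN (c j k) (c j k) (N - 1 - s))] at hco
  simp only [if_pos (show N - 1 - s ≤ N - 1 by omega)] at hco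
  have harg : N - 1 - (N - 1 - s) = s := by omega
  rw [harg] at hco
  rw [hco, hd, Polynomial.coeff_monomial]
  congr 1
  rw [eq_iff_iff]
  omega

noncomputable def zt (M : ℕ) : ℂ := Complex.exp (2 * Real.pi * Complex.I / M)

lemma zt_ne_zero (M : ℕ) : zt M ≠ 0 := Complex.exp_ne_zero _

lemma zt_pow_M (M : ℕ) (hM : 0 < M) : zt M ^ M = 1 := by
  rw [zt, ← Complex.exp_nat_mul]
  have hMne : (M : ℂ) ≠ 0 := Nat.cast_ne_zero.mpr hM.ne'
  rw [show (M : ℂ) * (2 * Real.pi * Complex.I / M) = 2 * Real.pi * Complex.I by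
    field_simp]
  exact Complex.exp_two_pi_mul_I

lemma zt_pow_mod (M : ℕ) (hM : 0 < M) (a : ℕ) : zt M ^ (a % M) = zt M ^ a := by
  conv_rhs => rw [← Nat.div_add_mod a M]
  rw [pow_add, pow_mul, zt_pow_M M hM, one_pow, one_mul]

lemma zt_pow_congr (M : ℕ) (hM : 0 < M) {a b : ℕ} (h : a ≡ b [MOD M]) :
    zt M ^ a = zt M ^ b := by
  rw [← zt_pow_mod M hM a, ← zt_pow_mod M hM b, Nat.ModEq] at *
  rw [h]

lemma exp_eq_zt_pow (M a b : ℕ) :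
    Complex.exp (2 * Real.pi * Complex.I * (a : ℂ) * (b : ℂ) / M) = zt M ^ (a * b) := by
  rw [zt, ← Complex.exp_nat_mul]
  congr 1
  push_cast
  ring

lemma conj_zt_pow (M n : ℕ) : (starRingEnd ℂ) (zt M ^ n) = (zt M ^ n)⁻¹ := by
  rw [map_pow, ← inv_pow]
  congr 1
  rw [zt, ← Complex.exp_conj, ← Complex.exp_neg]
  congr 1
  simp [map_div₀, Complex.conj_ofReal, map_ofNat]
  ring

lemma geom_zt (M : ℕ) (hM : 0 < M) (j u : ℕ) (hj : j < M) (hu : u < M) :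
    ∑ i ∈ Finset.range M, (zt M ^ j * (zt M ^ u)⁻¹) ^ i =
      if j = u then (M : ℂ) else 0 := by
  by_cases h : j = u
  · subst h
    rw [if_pos rfl, mul_inv_cancel₀ (pow_ne_zero _ (zt_ne_zero M))]
    simp
  · have hprim := Complex.isPrimitiveRoot_exp M hM.ne'
    have hne : zt M ^ j * (zt M ^ u)⁻¹ ≠ 1 := by
      intro hw
      apply h
      apply hprim.pow_inj hj hu
      have hu0 : zt M ^ u ≠ 0 := pow_ne_zero _ (zt_ne_zero M)
      field_simp at hw
      exact hw
    rw [if_neg h, geom_sum_eq hne]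
    have hw1 : (zt M ^ j * (zt M ^ u)⁻¹) ^ M = 1 := by
      rw [mul_pow, inv_pow, ← pow_mul, ← pow_mul, mul_comm j M, mul_comm u M,
        pow_mul, pow_mul, zt_pow_M M hM, one_pow, one_pow, inv_one, mul_one]
    rw [hw1]
    simp

lemma modNQ (Q N q v : ℕ) (hQ : 0 < Q) (hN : 0 < N) (hv : v < N) :
    (q * N + v) % (Q * N) = (q % Q) * N + v := by
  conv_lhs => rw [← Nat.div_add_mod q Q]
  rw [show (Q * (q / Q) + q % Q) * N + v = (q % Q * N + v) + (Q * N) * (q / Q) by ring,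
    Nat.add_mul_mod_self_left]
  apply Nat.mod_eq_of_lt
  have h1 : q % Q < Q := Nat.mod_lt _ hQ
  calc q % Q * N + v < q % Q * N + N := by omega
    _ = (q % Q + 1) * N := by ring
    _ ≤ Q * N := Nat.mul_le_mul_right N (by omega)

lemma shift_mod (M N : ℕ) (hM : 0 < M) (hN : 0 < N) (i q v : ℕ) (hv : v < N) :
    (i * (M * N) + (q * N + v)) % (M ^ 2 * N) =
      ((i + q / M) % M) * (M * N) + ((q % M) * N + v) := by
  have h1 : i * (M * N) + (q * N + v) = (i * M + q) * N + v := by ring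
  rw [h1, show M ^ 2 * N = (M * M) * N by ring,
    modNQ (M * M) N _ v (Nat.mul_pos hM hM) hN hv]
  have h2 : i * M + q = (i + q / M) * M + q % M := by
    conv_lhs => rw [← Nat.div_add_mod q M]
    ring
  rw [h2, modNQ M M _ (q % M) hM hM (Nat.mod_lt _ hM)]
  ring

lemma Bseq_apply (M N : ℕ) (hM : 0 < M) (hN : 0 < N) (c : ℕ → ℕ → ℕ → ℂ) (k : ℕ)
    (i j r : ℕ) (hj : j < M) (hr : r < N) :
    Bseq M N c k (i * (M * N) + (j * N + r)) = zt M ^ (i * j) * c j k r := by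
  have hMN : 0 < M * N := Nat.mul_pos hM hN
  have hv : j * N + r < M * N := by
    calc j * N + r < j * N + N := by omega
      _ = (j + 1) * N := by ring
      _ ≤ M * N := Nat.mul_le_mul_right N (by omega)
  have hdiv : (i * (M * N) + (j * N + r)) / (M * N) = i := by
    rw [add_comm, Nat.add_mul_div_right _ _ hMN, Nat.div_eq_of_lt hv, zero_add]
  have hmod : (i * (M * N) + (j * N + r)) % (M * N) = j * N + r := by
    rw [add_comm, Nat.add_mul_mod_self_right, Nat.mod_eq_of_lt hv]
  have hdiv2 : (j * N + r) / N = j := by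
    rw [add_comm, Nat.add_mul_div_right _ _ hN, Nat.div_eq_of_lt hr, zero_add]
  have hmodN : (i * (M * N) + (j * N + r)) % N = r := by
    rw [show i * (M * N) + (j * N + r) = N * (i * M + j) + r by ring,
      Nat.mul_add_mod, Nat.mod_eq_of_lt hr]
  rw [Bseq, hdiv, hmod, hdiv2, hmodN, exp_eq_zt_pow]

lemma sum_range_mul {β : Type*} [AddCommMonoid β] (a b : ℕ) (f : ℕ → β) :
    ∑ n ∈ Finset.range (a * b), f n = ∑ i ∈ Finset.range a, ∑ v ∈ Finset.range b, f (i * b + v) := by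
  induction a with
  | zero => simp
  | succ a ih =>
    rw [show (a + 1) * b = a * b + b by ring, Finset.sum_range_add, ih,
      Finset.sum_range_succ]

lemma inner_sum_gen (M N : ℕ) (hM : 0 < M) (hN : 0 < N) (c : ℕ → ℕ → ℕ → ℂ) (k : ℕ)
    (j r q v : ℕ) (hj : j < M) (hr : r < N) (hv : v < N) :
    ∑ i ∈ Finset.range M,
      Bseq M N c k (i * (M * N) + (j * N + r)) *
        (starRingEnd ℂ) (Bseq M N c k ((i * (M * N) + (q * N + v)) % (M ^ 2 * N))) =
    (if j = q % M then (M : ℂ) else 0) *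
      ((zt M ^ (q / M * (q % M)))⁻¹ * (c j k r * (starRingEnd ℂ) (c (q % M) k v))) := by
  set u := q % M with hu'
  set e := q / M with he'
  have hu : u < M := Nat.mod_lt _ hM
  have hterm : ∀ i, Bseq M N c k (i * (M * N) + (j * N + r)) *
      (starRingEnd ℂ) (Bseq M N c k ((i * (M * N) + (q * N + v)) % (M ^ 2 * N))) =
      ((zt M ^ (e * u))⁻¹ * (c j k r * (starRingEnd ℂ) (c u k v))) *
        (zt M ^ j * (zt M ^ u)⁻¹) ^ i := by
    intro i
    rw [shift_mod M N hM hN i q v hv, Bseq_apply M N hM hN c k _ u v hu hv,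
      Bseq_apply M N hM hN c k i j r hj hr, map_mul, conj_zt_pow]
    have h1 : zt M ^ ((i + e) % M * u) = zt M ^ ((i + e) * u) :=
      zt_pow_congr M hM ((Nat.mod_modEq (i + e) M).mul_right u)
    rw [h1, show (i + e) * u = u * i + e * u by ring, pow_add, mul_inv,
      show i * j = j * i by ring, pow_mul, mul_pow, inv_pow, pow_mul]
    ring
  rw [Finset.sum_congr rfl (fun i _ => hterm i), ← Finset.mul_sum,
    geom_zt M hM j u hj hu]
  ring

lemma innerSumB (M N : ℕ) (hM : 0 < M) (hN : 0 < N) (c : ℕ → ℕ → ℕ → ℂ) (k : ℕ)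
    (p s : ℕ) (hs : s < N) (hp : p < M) (hps : p = M - 1 → s = 0)
    (j r : ℕ) (hj : j < M) (hr : r < N) :
    ∑ i ∈ Finset.range M,
      Bseq M N c k (i * (M * N) + (j * N + r)) *
        (starRingEnd ℂ)
          (Bseq M N c k ((i * (M * N) + (j * N + r) + (p * N + s)) % (M ^ 2 * N))) =
    if p = 0 ∧ r + s < N then (M : ℂ) * (c j k r * (starRingEnd ℂ) (c j k (r + s)))
    else 0 := by
  by_cases hA : r + s < N
  · have harg : ∀ i : ℕ, i * (M * N) + (j * N + r) + (p * N + s) =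
        i * (M * N) + ((j + p) * N + (r + s)) := fun i => by ring
    rw [Finset.sum_congr rfl (fun i _ => by rw [harg i]),
      inner_sum_gen M N hM hN c k j r (j + p) (r + s) hj hr hA]
    by_cases hp0 : p = 0
    · subst hp0
      simp only [Nat.add_zero, Nat.mod_eq_of_lt hj, Nat.div_eq_of_lt hj]
      simp [hA]
    · have hne : j ≠ (j + p) % M := by
        intro hcontra
        have h1 : j ≡ j + p [MOD M] := (Nat.mod_eq_of_lt hj).trans hcontra
        have h2 : M ∣ p := by
          have := (Nat.modEq_iff_dvd' (by omega)).mp h1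
          simpa using this
        have := Nat.le_of_dvd (by omega) h2
        omega
      rw [if_neg hne, zero_mul, if_neg (by rintro ⟨h0, -⟩; exact hp0 h0)]
  · have hs1 : 1 ≤ s := by omega
    have hpM : p + 1 < M := by
      rcases Nat.lt_or_ge (p + 1) M with h | h
      · exact h
      · exfalso; have : p = M - 1 := by omega
        exact absurd (hps this) (by omega)
    have hvlt : r + s - N < N := by omega
    have harg : ∀ i : ℕ, i * (M * N) + (j * N + r) + (p * N + s) =
        i * (M * N) + ((j + p + 1) * N + (r + s - N)) := by
      intro i
      have hrs : r + s = N + (r + s - N) := by omega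
      calc i * (M * N) + (j * N + r) + (p * N + s)
          = i * (M * N) + (j + p) * N + (r + s) := by ring
        _ = i * (M * N) + (j + p) * N + (N + (r + s - N)) := by rw [← hrs]
        _ = i * (M * N) + ((j + p + 1) * N + (r + s - N)) := by ring
    rw [Finset.sum_congr rfl (fun i _ => by rw [harg i]),
      inner_sum_gen M N hM hN c k j r (j + p + 1) (r + s - N) hj hr hvlt]
    have hne : j ≠ (j + p + 1) % M := by
      intro hcontra
      have h1 : j ≡ j + (p + 1) [MOD M] := by
        have : j % M = (j + p + 1) % M := (Nat.mod_eq_of_lt hj).trans hcontra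
        simpa [Nat.ModEq, Nat.add_assoc] using this
      have h2 : M ∣ p + 1 := by
        have := (Nat.modEq_iff_dvd' (by omega)).mp h1
        simpa using this
      have := Nat.le_of_dvd (by omega) h2
      omega
    rw [if_neg hne, zero_mul, if_neg (by rintro ⟨-, h0⟩; exact hA h0)]

lemma pCorr_eq (M N : ℕ) (hM : 0 < M) (hN : 0 < N) (c : ℕ → ℕ → ℕ → ℂ) (k : ℕ)
    (τ : ℕ) (hτ : τ ≤ (M - 1) * N) :
    pCorr (Bseq M N c k) (Bseq M N c k) (M ^ 2 * N) τ =
      if τ < N then (M : ℂ) * ∑ j ∈ Finset.range M, aCorr (c j k) (c j k) N τ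
      else 0 := by
  obtain ⟨p, s, hs, rfl⟩ : ∃ p s, s < N ∧ τ = p * N + s :=
    ⟨τ / N, τ % N, Nat.mod_lt _ hN, by rw [mul_comm]; exact (Nat.div_add_mod τ N).symm⟩
  have hp : p < M := by
    have h1 : p * N ≤ (M - 1) * N := le_trans (Nat.le_add_right _ _) hτ
    have h2 : p ≤ M - 1 := Nat.le_of_mul_le_mul_right h1 hN
    omega
  have hps : p = M - 1 → s = 0 := by
    intro h
    subst h
    omega
  rw [pCorr]
  rw [show Finset.range (M ^ 2 * N) = Finset.range (M * (M * N)) by rw [show M ^ 2 * N = M * (M * N) by ring]]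
  rw [sum_range_mul M (M * N)]
  rw [Finset.sum_congr rfl (fun i _ => sum_range_mul M N
    (fun v => Bseq M N c k (i * (M * N) + v) *
      (starRingEnd ℂ) (Bseq M N c k ((i * (M * N) + v + (p * N + s)) % (M ^ 2 * N)))))]
  rw [Finset.sum_comm]
  rw [Finset.sum_congr rfl (fun j _ => Finset.sum_comm)]
  rw [Finset.sum_congr rfl (fun j hj => Finset.sum_congr rfl (fun r hr =>
    innerSumB M N hM hN c k p s hs hp hps j r
      (Finset.mem_range.mp hj) (Finset.mem_range.mp hr)))]
  by_cases hp0 : p = 0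
  · subst hp0
    simp only [Nat.zero_mul, Nat.zero_add, true_and]
    rw [if_pos hs]
    rw [Finset.mul_sum]
    apply Finset.sum_congr rfl
    intro j _
    rw [aCorr, Finset.mul_sum]
    rw [show (∑ r ∈ Finset.range N,
        if r + s < N then (M : ℂ) * (c j k r * (starRingEnd ℂ) (c j k (r + s)))
        else 0) =
      ∑ r ∈ Finset.range N,
        if r < N - s then (M : ℂ) * (c j k r * (starRingEnd ℂ) (c j k (r + s)))
        else 0 from Finset.sum_congr rfl (fun r _ => by congr 1; rw [eq_iff_iff]; omega)]
    rw [sum_ite_range N (N - s) (by omega)]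
  · have hNle : N ≤ p * N := by
      calc N = 1 * N := (one_mul N).symm
        _ ≤ p * N := Nat.mul_le_mul_right N (by omega)
    rw [if_neg (by omega)]
    simp [hp0]

theorem statement12 (M N : ℕ) (hM : 0 < M) (hN : 0 < N)
    (c : ℕ → ℕ → ℕ → ℂ)
    (hCCC : ∀ k1 < M, ∀ k2 < M, ∀ τ < N,
      ∑ m ∈ Finset.range M, aCorr (c k1 m) (c k2 m) N τ =
        if k1 = k2 ∧ τ = 0 then (M * N : ℂ) else 0) :
    ∀ k < M,
      pCorr (Bseq M N c k) (Bseq M N c k) (M ^ 2 * N) 0 = (M ^ 2 * N : ℂ) ∧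
      (∀ τ, 1 ≤ τ → τ ≤ (M - 1) * N →
        pCorr (Bseq M N c k) (Bseq M N c k) (M ^ 2 * N) τ = 0) := by
  intro k hk
  constructor
  · rw [pCorr_eq M N hM hN c k 0 (Nat.zero_le _), if_pos hN,
      transpose_lemma M N hM hN c hCCC k hk 0 hN, if_pos rfl]
    push_cast
    ring
  · intro τ h1 h2
    rw [pCorr_eq M N hM hN c k τ h2]
    by_cases hτN : τ < N
    · rw [if_pos hτN, transpose_lemma M N hM hN c hCCC k hk τ hτN,
        if_neg (by omega), mul_zero]
    · rw [if_neg hτN]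
end
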